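/- arXiv:1910.08390 — 5 statements merged into one kernel-verified Lean document; each statement's English description precedes it below -/
import Mathlib

section
/- For every a0 ∈ ℝ with |a0| < 1 and every ε > 0, the following integral identity holds: (1/(2π)) · ∫_{−π}^{π} log( 1 + ε²/|e^{iω} − a0|² ) dω = log( (1 + a0² + ε²)/2 + √( ((1 + a0² + ε²)/2)² − a0² ) ), where |e^{iω} − a0|² = 1 + a0² − 2a0·cos(ω). -/
open Real

open MeasureTheory

lemma quad_pos {r : ℝ} (hr : |r| < 1) (ω : ℝ) : 0 < 1 + r^2 - 2*r*Real.cos ω := by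
  have h1 : |2*r*Real.cos ω| ≤ 2*|r| := by
    rw [abs_mul, abs_mul, abs_two]
    have := Real.abs_cos_le_one ω
    nlinarith [abs_nonneg r]
  have h2 : 2*|r| < 1 + r^2 := by nlinarith [sq_abs r]
  have := abs_le.mp h1
  linarith [this.1, this.2]

lemma pointwise_hasSum {r : ℝ} (hr : |r| < 1) (ω : ℝ) :
    HasSum (fun n : ℕ => r^n * Real.cos (n*ω) / n)
      (-(1/2) * Real.log (1 + r^2 - 2*r*Real.cos ω)) := by
  set z : ℂ := r * Complex.exp (ω * Complex.I) with hz
  have hzn : ‖z‖ < 1 := by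
    rw [hz, norm_mul]
    rw [Complex.norm_exp_ofReal_mul_I]
    simpa using hr
  have h := (Complex.hasSum_taylorSeries_neg_log hzn).mapL Complex.reCLM
  have habs : ‖1 - z‖ ^ 2 = 1 + r^2 - 2*r*Real.cos ω := by
    rw [← Complex.normSq_eq_norm_sq, Complex.normSq_apply]
    simp [hz, Complex.exp_mul_I, Complex.sub_re, Complex.sub_im, Complex.mul_re, Complex.mul_im,
      Complex.cos_ofReal_re, Complex.sin_ofReal_re]
    nlinarith [Real.sin_sq_add_cos_sq ω]
  have habs_pos : 0 < ‖1 - z‖ := by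
    have := quad_pos hr ω
    nlinarith [norm_nonneg (1 - z)]
  have hre : (-(Complex.log (1 - z))).re = -(1/2) * Real.log (1 + r^2 - 2*r*Real.cos ω) := by
    rw [Complex.neg_re, Complex.log_re, ← habs, Real.log_pow]
    push_cast; ring
  have hterm : ∀ n : ℕ, (Complex.reCLM (z^n / n)) = r^n * Real.cos (n*ω) / n := by
    intro n
    have hzp : z^n = (r:ℂ)^n * Complex.exp ((n*ω : ℝ) * Complex.I) := by
      rw [hz, mul_pow, ← Complex.exp_nat_mul]
      push_cast; ring_nf
    simp only [Complex.reCLM_apply, hzp]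
    rw [Complex.div_natCast_re]
    have hc : ((n:ℂ) * (ω:ℂ)) = ((n*ω : ℝ) : ℂ) := by push_cast; ring
    simp only [Complex.exp_mul_I, Complex.mul_re, Complex.mul_im, hc,
      ← Complex.ofReal_cos, ← Complex.ofReal_sin, ← Complex.ofReal_pow,
      Complex.ofReal_re, Complex.ofReal_im, Complex.add_re, Complex.mul_I_re, Complex.I_re]
    ring
  rw [← hre]
  simp only [hterm] at h; exact h

lemma cos_int (n : ℕ) : ∫ ω in (-π)..π, Real.cos ((n+1) * ω) = 0 := by
  have h : ((n:ℝ)+1) ≠ 0 := by positivity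
  rw [intervalIntegral.integral_comp_mul_left (fun x => Real.cos x) h, integral_cos]
  have : ((n:ℝ)+1) * π = (n+1 : ℕ) * π := by push_cast; ring
  rw [mul_neg, Real.sin_neg, this, Real.sin_nat_mul_pi]
  simp

lemma jensen {r : ℝ} (hr : |r| < 1) :
    ∫ ω in (-π)..π, Real.log (1 + r^2 - 2*r*Real.cos ω) = 0 := by
  set μ := volume.restrict (Set.Ioc (-π) π) with hμ
  set F : ℕ → ℝ → ℝ := fun n ω => r^n * Real.cos (n*ω) / n with hF
  have hcont : ∀ n, Continuous (F n) := by
    intro n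
    exact ((continuous_const.mul (Real.continuous_cos.comp (continuous_const.mul continuous_id))).div_const _)
  have hint : ∀ n, Integrable (F n) μ := fun n =>
    (hcont n).integrableOn_Ioc.integrable
  have hbound : ∀ n ω, ‖F n ω‖ ≤ |r|^n := by
    intro n ω
    rcases Nat.eq_zero_or_pos n with rfl | hn
    · simp [hF]
    have h1 : |Real.cos (n*ω)| ≤ 1 := Real.abs_cos_le_one _
    have h2 : (1:ℝ) ≤ n := by exact_mod_cast hn
    rw [hF, Real.norm_eq_abs, abs_div, abs_mul, abs_pow, Nat.abs_cast]
    rw [div_le_iff₀ (by positivity)]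
    calc |r|^n * |Real.cos (n*ω)| ≤ |r|^n * 1 := by
          exact mul_le_mul_of_nonneg_left h1 (by positivity)
      _ ≤ |r|^n * n := by nlinarith [pow_nonneg (abs_nonneg r) n]
  have hsum_norm : Summable fun n => ∫ ω, ‖F n ω‖ ∂μ := by
    apply Summable.of_nonneg_of_le (fun n => integral_nonneg (fun ω => norm_nonneg _))
      (fun n => ?_) (summable_geometric_of_lt_one (abs_nonneg r) hr |>.mul_left (2*π))
    have : ∫ ω, ‖F n ω‖ ∂μ ≤ ∫ ω, |r|^n ∂μ := by
      apply integral_mono ((hint n).norm) (integrable_const _) (fun ω => hbound n ω)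
    calc ∫ ω, ‖F n ω‖ ∂μ ≤ ∫ ω, |r|^n ∂μ := this
      _ = (2*π) * |r|^n := by
          rw [hμ, integral_const, measureReal_def, Measure.restrict_apply_univ, Real.volume_Ioc, smul_eq_mul,
            ENNReal.toReal_ofReal (by linarith [Real.pi_pos] : (0:ℝ) ≤ π - -π)]
          ring
  have hswap := hasSum_integral_of_summable_integral_norm (μ := μ) hint hsum_norm
  have hzero : ∀ n, ∫ ω, F n ω ∂μ = 0 := by
    intro n
    rcases Nat.eq_zero_or_pos n with rfl | hn
    · simp [hF]
    obtain ⟨m, rfl⟩ := Nat.exists_eq_succ_of_ne_zero hn.ne'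
    have : ∫ ω, F (m+1) ω ∂μ = ∫ ω in (-π)..π, F (m+1) ω := by
      rw [intervalIntegral.integral_of_le (by linarith [Real.pi_pos] : -π ≤ π)]
    rw [this, hF]
    simp only []
    push_cast
    rw [intervalIntegral.integral_div, intervalIntegral.integral_const_mul, cos_int m]
    simp
  have h0 : HasSum (fun n : ℕ => (0:ℝ)) (∫ ω, (∑' n, F n ω) ∂μ) := by
    have e : (fun n : ℕ => (0:ℝ)) = fun n => ∫ ω, F n ω ∂μ := funext fun n => (hzero n).symm
    rw [e]; exact hswap
  have hL : ∫ ω, (∑' n, F n ω) ∂μ = 0 := (h0.unique hasSum_zero).symm ▸ rfl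
  have hts : ∀ ω, (∑' n, F n ω) = -(1/2) * Real.log (1 + r^2 - 2*r*Real.cos ω) :=
    fun ω => (pointwise_hasSum hr ω).tsum_eq
  have : ∫ ω, -(1/2) * Real.log (1 + r^2 - 2*r*Real.cos ω) ∂μ = 0 := by
    rw [← hL]; exact integral_congr_ae (Filter.Eventually.of_forall fun ω => (hts ω).symm)
  rw [integral_const_mul] at this
  have h2 : ∫ ω, Real.log (1 + r^2 - 2*r*Real.cos ω) ∂μ = 0 := by
    rcases mul_eq_zero.mp this with h | h
    · norm_num at h
    · exact h
  rw [intervalIntegral.integral_of_le (by linarith [Real.pi_pos] : -π ≤ π)]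
  exact h2

lemma lin_pos {a b : ℝ} (hab : 2*|a| < b) (ω : ℝ) : 0 < b - 2*a*Real.cos ω := by
  have h1 : |2*a*Real.cos ω| ≤ 2*|a| := by
    rw [abs_mul, abs_mul, abs_two]
    have := Real.abs_cos_le_one ω
    nlinarith [abs_nonneg a]
  have := abs_le.mp h1
  linarith [this.1, this.2]

lemma intB {a b : ℝ} (hab : 2*|a| < b) :
    ∫ ω in (-π)..π, Real.log (b - 2*a*Real.cos ω)
      = 2*π*Real.log ((b + Real.sqrt (b^2 - 4*a^2))/2) := by
  have hb : 0 < b := lt_of_le_of_lt (by positivity) hab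
  rcases eq_or_ne a 0 with rfl | ha
  · simp only [mul_zero, zero_mul, sub_zero]
    rw [intervalIntegral.integral_const]
    have : Real.sqrt (b^2 - 4*0^2) = b := by
      rw [show b^2 - 4*(0:ℝ)^2 = b^2 by ring, Real.sqrt_sq hb.le]
    rw [this, show (b+b)/2 = b by ring, smul_eq_mul]
    ring
  · set d := Real.sqrt (b^2 - 4*a^2) with hd
    have hd2 : d^2 = b^2 - 4*a^2 := Real.sq_sqrt (by nlinarith [sq_abs a, abs_nonneg a, sq_nonneg (b - 2*|a|)])
    have hd0 : 0 ≤ d := Real.sqrt_nonneg _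
    have hdb : d < b := by
      have ha2 : (0:ℝ) < a^2 := by positivity
      have h1 : d < Real.sqrt (b^2) := Real.sqrt_lt_sqrt (by nlinarith [sq_abs a, abs_nonneg a, sq_nonneg (b - 2*|a|)]) (by nlinarith)
      rwa [Real.sqrt_sq hb.le] at h1
    set r := (b - d)/(2*a) with hr
    set s := (b + d)/2 with hs
    have hs0 : 0 < s := by rw [hs]; linarith
    have ha' : (0:ℝ) < |a| := abs_pos.mpr ha
    have hrabs : |r| < 1 := by
      rw [hr, abs_div]
      rw [div_lt_one (by rw [abs_mul, abs_two]; positivity)]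
      rw [abs_mul, abs_two, abs_of_pos (by linarith : (0:ℝ) < b - d)]
      nlinarith [sq_abs a]
    have hsr : s * r = a := by
      rw [hs, hr]
      field_simp
      nlinarith
    have hs1r : s * (1 + r^2) = b := by
      have : s * r^2 = a * r := by rw [← hsr]; ring
      rw [mul_add, mul_one, this, hr, hs]
      field_simp
      ring
    have hfact : ∀ ω, b - 2*a*Real.cos ω = s * (1 + r^2 - 2*r*Real.cos ω) := by
      intro ω
      have : s * (2*r*Real.cos ω) = 2*a*Real.cos ω := by rw [← hsr]; ring
      rw [mul_sub, hs1r, this]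
    have hlog : ∀ ω, Real.log (b - 2*a*Real.cos ω)
        = Real.log s + Real.log (1 + r^2 - 2*r*Real.cos ω) := by
      intro ω
      rw [hfact ω, Real.log_mul hs0.ne' (quad_pos hrabs ω).ne']
    rw [intervalIntegral.integral_congr (fun ω _ => hlog ω)]
    have hint1 : IntervalIntegrable (fun _ : ℝ => Real.log s) volume (-π) π :=
      intervalIntegrable_const
    have hcont2 : Continuous fun ω => Real.log (1 + r^2 - 2*r*Real.cos ω) :=
      (continuous_const.sub (continuous_const.mul Real.continuous_cos)).log
        (fun ω => (quad_pos hrabs ω).ne')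
    rw [intervalIntegral.integral_add hint1 (hcont2.intervalIntegrable _ _), jensen hrabs,
      intervalIntegral.integral_const, hs, smul_eq_mul]
    ring

/-- Szegő-type integral identity (Fact 1 in the supplementary material). -/
theorem stmt_7 (a0 : ℝ) (ha : |a0| < 1) (ε : ℝ) (hε : 0 < ε) :
    (1 / (2 * π)) * ∫ ω in (-π)..π,
        Real.log (1 + ε ^ 2 / (1 + a0 ^ 2 - 2 * a0 * Real.cos ω)) =
      Real.log ((1 + a0 ^ 2 + ε ^ 2) / 2 +
        Real.sqrt (((1 + a0 ^ 2 + ε ^ 2) / 2) ^ 2 - a0 ^ 2)) := by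
  have hpi := Real.pi_pos
  have hone : (0:ℝ) < (1 - |a0|)^2 := pow_pos (by linarith) 2
  have hab2 : 2*|a0| < 1 + a0^2 := by nlinarith [sq_abs a0]
  have hab1 : 2*|a0| < 1 + a0^2 + ε^2 := by nlinarith
  have hlog : ∀ ω, Real.log (1 + ε ^ 2 / (1 + a0 ^ 2 - 2 * a0 * Real.cos ω))
      = Real.log (1 + a0^2 + ε^2 - 2*a0*Real.cos ω)
        - Real.log (1 + a0^2 - 2*a0*Real.cos ω) := by
    intro ω
    have hD := lin_pos hab2 ω
    have hN := lin_pos hab1 ω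
    have he : 1 + ε ^ 2 / (1 + a0 ^ 2 - 2 * a0 * Real.cos ω)
        = (1 + a0^2 + ε^2 - 2*a0*Real.cos ω) / (1 + a0 ^ 2 - 2 * a0 * Real.cos ω) := by
      rw [eq_div_iff hD.ne', add_mul, div_mul_cancel₀ _ hD.ne']; ring
    rw [he, Real.log_div hN.ne' hD.ne']
  have hc1 : Continuous fun ω => Real.log (1 + a0^2 + ε^2 - 2*a0*Real.cos ω) :=
    (continuous_const.sub (continuous_const.mul Real.continuous_cos)).log
      (fun ω => (lin_pos hab1 ω).ne')
  have hc2 : Continuous fun ω => Real.log (1 + a0^2 - 2*a0*Real.cos ω) :=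
    (continuous_const.sub (continuous_const.mul Real.continuous_cos)).log
      (fun ω => (lin_pos hab2 ω).ne')
  rw [intervalIntegral.integral_congr (fun ω _ => hlog ω),
    intervalIntegral.integral_sub (hc1.intervalIntegrable _ _) (hc2.intervalIntegrable _ _),
    intB hab1, intB hab2]
  have h2 : Real.sqrt ((1 + a0^2)^2 - 4*a0^2) = 1 - a0^2 := by
    rw [show (1 + a0^2)^2 - 4*a0^2 = (1 - a0^2)^2 by ring]
    exact Real.sqrt_sq (by nlinarith [sq_abs a0, mul_pos (by linarith : (0:ℝ) < 1 - |a0|) (by positivity : (0:ℝ) < 1 + |a0|)])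
  rw [h2, show (1 + a0^2 + (1 - a0^2))/2 = 1 by ring, Real.log_one, mul_zero, sub_zero]
  have h3 : Real.sqrt (((1 + a0 ^ 2 + ε ^ 2) / 2) ^ 2 - a0 ^ 2)
      = Real.sqrt ((1 + a0^2 + ε^2)^2 - 4*a0^2) / 2 := by
    rw [show ((1 + a0 ^ 2 + ε ^ 2) / 2) ^ 2 - a0 ^ 2
        = ((1 + a0^2 + ε^2)^2 - 4*a0^2) / 4 by ring,
      Real.sqrt_div (by nlinarith [sq_abs a0, abs_nonneg a0]) 4,
      show Real.sqrt 4 = 2 by rw [show (4:ℝ) = 2^2 by norm_num, Real.sqrt_sq (by norm_num)]]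
  rw [h3]
  field_simp
end

section
/- Fix a0 ∈ ℝ with a0² ≠ 1 and an integer n ≥ 2. Let A be the n×n real matrix with entries A_{ij} = a0^{|i−j|}·(a0^{2·min(i,j)} − 1)/(a0² − 1) for i, j = 1, …, n, and let B be the n×n real tridiagonal matrix with B_{ii} = a0² + 1 for i = 1, …, n−1, B_{nn} = 1, B_{i,i+1} = B_{i+1,i} = −a0 for i = 1, …, n−1, and all other entries zero. Then A·B = I_n; in particular A is invertible with inverse B. -/
noncomputable def fA (a0 : ℝ) (i k : ℕ) : ℝ :=
  a0 ^ (((i : ℤ) - (k : ℤ)).natAbs) * (a0 ^ (2 * (min i k + 1)) - 1) / (a0 ^ 2 - 1)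

noncomputable def fB (a0 : ℝ) (n k j : ℕ) : ℝ :=
  if k = j then (if k = n - 1 then 1 else a0 ^ 2 + 1)
  else if ((k : ℤ) - (j : ℤ)).natAbs = 1 then -a0 else 0

lemma key (a0 : ℝ) (ha : a0 ^ 2 ≠ 1) (n : ℕ) (hn : 2 ≤ n) (i j : ℕ)
    (hi : i < n) (hj : j < n) :
    ∑ k ∈ Finset.range n, fA a0 i k * fB a0 n k j = if i = j then 1 else 0 := by
  have hD : a0 ^ 2 - 1 ≠ 0 := sub_ne_zero.mpr ha
  have hsum : ∑ k ∈ Finset.range n, fA a0 i k * fB a0 n k j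
      = (if 1 ≤ j then fA a0 i (j - 1) * (-a0) else 0)
        + fA a0 i j * (if j = n - 1 then 1 else a0 ^ 2 + 1)
        + (if j + 1 < n then fA a0 i (j + 1) * (-a0) else 0) := by
    have h1 : ∀ k ∈ Finset.range n, fA a0 i k * fB a0 n k j =
        (if k = j - 1 ∧ 1 ≤ j then fA a0 i k * (-a0) else 0)
        + (if k = j then fA a0 i k * (if j = n - 1 then 1 else a0 ^ 2 + 1) else 0)
        + (if k = j + 1 then fA a0 i k * (-a0) else 0) := by
      intro k _
      simp only [fB]
      split_ifs <;> first | (exfalso; omega) | ring1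
    rw [Finset.sum_congr rfl h1, Finset.sum_add_distrib, Finset.sum_add_distrib]
    congr 1
    · congr 1
      · rcases Nat.lt_or_ge j 1 with h | h
        · have hj0 : j = 0 := by omega
          simp [hj0]
        · rw [if_pos h]
          simp only [h, and_true]
          rw [Finset.sum_ite_eq' (Finset.range n)]
          rw [if_pos (Finset.mem_range.mpr (by omega))]
      · rw [Finset.sum_ite_eq' (Finset.range n)]
        rw [if_pos (Finset.mem_range.mpr hj)]
    · rcases Nat.lt_or_ge (j + 1) n with h | h
      · rw [if_pos h, Finset.sum_ite_eq' (Finset.range n),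
          if_pos (Finset.mem_range.mpr h)]
      · rw [if_neg (by omega)]
        apply Finset.sum_eq_zero
        intro k hk
        rw [if_neg (by simp at hk; omega)]
  rw [hsum]
  rcases lt_trichotomy i j with hij | hij | hij
  · -- i < j
    obtain ⟨d, rfl⟩ : ∃ d, j = i + d + 1 := ⟨j - i - 1, by omega⟩
    rw [if_pos (show 1 ≤ i + d + 1 by omega),
      if_neg (show ¬ i = i + d + 1 by omega)]
    have e0 : i + d + 1 - 1 = i + d := by omega
    have n1 : (((i : ℤ)) - ((i + d : ℕ) : ℤ)).natAbs = d := by omega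
    have n2 : (((i : ℤ)) - ((i + d + 1 : ℕ) : ℤ)).natAbs = d + 1 := by omega
    have n3 : (((i : ℤ)) - ((i + d + 1 + 1 : ℕ) : ℤ)).natAbs = d + 2 := by omega
    have m1 : min i (i + d) = i := by omega
    have m2 : min i (i + d + 1) = i := by omega
    have m3 : min i (i + d + 1 + 1) = i := by omega
    rcases eq_or_ne (i + d + 1) (n - 1) with hlast | hlast
    · rw [if_pos hlast, if_neg (show ¬ i + d + 1 + 1 < n by omega)]
      simp only [fA, e0, n1, n2, m1, m2]
      field_simp
      ring
    · rw [if_neg hlast, if_pos (show i + d + 1 + 1 < n by omega)]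
      simp only [fA, e0, n1, n2, n3, m1, m2, m3]
      field_simp
      ring
  · -- i = j
    subst hij
    rw [if_pos rfl]
    rcases eq_or_ne i (n - 1) with hlast | hlast
    · obtain ⟨m, rfl⟩ : ∃ m, i = m + 1 := ⟨i - 1, by omega⟩
      rw [if_pos (show 1 ≤ m + 1 by omega), if_pos hlast,
        if_neg (show ¬ m + 1 + 1 < n by omega)]
      have e0 : m + 1 - 1 = m := by omega
      have n1 : (((m + 1 : ℕ) : ℤ) - ((m : ℕ) : ℤ)).natAbs = 1 := by omega
      have n2 : (((m + 1 : ℕ) : ℤ) - ((m + 1 : ℕ) : ℤ)).natAbs = 0 := by omega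
      have m1 : min (m + 1) m = m := by omega
      have m2 : min (m + 1) (m + 1) = m + 1 := by omega
      simp only [fA, e0, n1, n2, m1, m2]
      field_simp
      ring
    · rw [if_neg hlast, if_pos (show i + 1 < n by omega)]
      rcases Nat.lt_or_ge i 1 with h0 | h0
      · have hi0 : i = 0 := by omega
        subst hi0
        rw [if_neg (show ¬ (1 : ℕ) ≤ 0 by omega)]
        have n2 : (((0 : ℕ) : ℤ) - ((0 : ℕ) : ℤ)).natAbs = 0 := by omega
        have n3 : (((0 : ℕ) : ℤ) - ((0 + 1 : ℕ) : ℤ)).natAbs = 1 := by omega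
        have m2 : min 0 0 = 0 := by omega
        have m3 : min 0 (0 + 1) = 0 := by omega
        simp only [fA, n2, n3, m2, m3]
        field_simp
        ring
      · obtain ⟨m, rfl⟩ : ∃ m, i = m + 1 := ⟨i - 1, by omega⟩
        rw [if_pos (show 1 ≤ m + 1 by omega)]
        have e0 : m + 1 - 1 = m := by omega
        have n1 : (((m + 1 : ℕ) : ℤ) - ((m : ℕ) : ℤ)).natAbs = 1 := by omega
        have n2 : (((m + 1 : ℕ) : ℤ) - ((m + 1 : ℕ) : ℤ)).natAbs = 0 := by omega
        have n3 : (((m + 1 : ℕ) : ℤ) - ((m + 1 + 1 : ℕ) : ℤ)).natAbs = 1 := by omega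
        have m1 : min (m + 1) m = m := by omega
        have m2 : min (m + 1) (m + 1) = m + 1 := by omega
        have m3 : min (m + 1) (m + 1 + 1) = m + 1 := by omega
        simp only [fA, e0, n1, n2, n3, m1, m2, m3]
        field_simp
        ring
  · -- j < i
    obtain ⟨d, rfl⟩ : ∃ d, i = j + d + 1 := ⟨i - j - 1, by omega⟩
    rw [if_neg (show ¬ j + d + 1 = j by omega),
      if_neg (show ¬ j = n - 1 by omega),
      if_pos (show j + 1 < n by omega)]
    rcases Nat.lt_or_ge j 1 with h0 | h0
    · have hj0 : j = 0 := by omega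
      subst hj0
      rw [if_neg (show ¬ (1 : ℕ) ≤ 0 by omega)]
      have n2 : (((0 + d + 1 : ℕ) : ℤ) - ((0 : ℕ) : ℤ)).natAbs = d + 1 := by omega
      have n3 : (((0 + d + 1 : ℕ) : ℤ) - ((0 + 1 : ℕ) : ℤ)).natAbs = d := by omega
      have m2 : min (0 + d + 1) 0 = 0 := by omega
      have m3 : min (0 + d + 1) (0 + 1) = 1 := by omega
      simp only [fA, n2, n3, m2, m3]
      field_simp
      ring
    · obtain ⟨m, rfl⟩ : ∃ m, j = m + 1 := ⟨j - 1, by omega⟩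
      rw [if_pos (show 1 ≤ m + 1 by omega)]
      have e0 : m + 1 - 1 = m := by omega
      have n1 : (((m + 1 + d + 1 : ℕ) : ℤ) - ((m : ℕ) : ℤ)).natAbs = d + 2 := by omega
      have n2 : (((m + 1 + d + 1 : ℕ) : ℤ) - ((m + 1 : ℕ) : ℤ)).natAbs = d + 1 := by omega
      have n3 : (((m + 1 + d + 1 : ℕ) : ℤ) - ((m + 1 + 1 : ℕ) : ℤ)).natAbs = d := by omega
      have m1 : min (m + 1 + d + 1) m = m := by omega
      have m2 : min (m + 1 + d + 1) (m + 1) = m + 1 := by omega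
      have m3 : min (m + 1 + d + 1) (m + 1 + 1) = m + 1 + 1 := by omega
      simp only [fA, e0, n1, n2, n3, m1, m2, m3]
      field_simp
      ring

/-- Fact 2: explicit tridiagonal inverse of the unstable AR(1) covariance matrix.
Indices `i j : Fin n` correspond to 1-based indices `i+1, j+1 ∈ {1,…,n}`. -/
theorem stmt_8 (a0 : ℝ) (ha : a0 ^ 2 ≠ 1) (n : ℕ) (hn : 2 ≤ n)
    (A B : Matrix (Fin n) (Fin n) ℝ)
    (hA : ∀ i j, A i j = a0 ^ (((i : ℤ) - (j : ℤ)).natAbs) *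
      (a0 ^ (2 * (min (i : ℕ) (j : ℕ) + 1)) - 1) / (a0 ^ 2 - 1))
    (hB : ∀ i j : Fin n, B i j =
      if (i : ℕ) = (j : ℕ) then (if (i : ℕ) = n - 1 then 1 else a0 ^ 2 + 1)
      else if ((i : ℤ) - (j : ℤ)).natAbs = 1 then -a0 else 0) :
    A * B = 1 ∧ IsUnit A ∧ A⁻¹ = B := by
  have hmul : A * B = 1 := by
    ext i j
    rw [Matrix.mul_apply]
    have hstep : ∀ k : Fin n, A i k * B k j
        = (fun m => fA a0 (i : ℕ) m * fB a0 n m (j : ℕ)) (k : ℕ) := by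
      intro k
      simp only [hA, hB, fA, fB]
    calc ∑ k, A i k * B k j
        = ∑ k : Fin n, (fun m => fA a0 (i : ℕ) m * fB a0 n m (j : ℕ)) (k : ℕ) :=
          Finset.sum_congr rfl (fun k _ => hstep k)
      _ = ∑ k ∈ Finset.range n, fA a0 (i : ℕ) k * fB a0 n k (j : ℕ) := by
          exact Fin.sum_univ_eq_sum_range (fun m => fA a0 (i : ℕ) m * fB a0 n m (j : ℕ)) n
      _ = if (i : ℕ) = (j : ℕ) then 1 else 0 := key a0 ha n hn _ _ i.isLt j.isLt
      _ = (1 : Matrix (Fin n) (Fin n) ℝ) i j := by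
          rw [Matrix.one_apply]
          simp [Fin.ext_iff]
  refine ⟨hmul, ?_, Matrix.inv_eq_right_inv hmul⟩
  exact ⟨⟨A, B, hmul, mul_eq_one_comm.mp hmul⟩, rfl⟩
end

section
/- Let (t_k)_{k≥0} be a sequence of reals and for each integer n ≥ 1 let T_n be the n×n symmetric Toeplitz matrix with entries (T_n)_{ij} = t_{|i−j|}. Let N ≥ 2 be an integer and suppose T_{N+1} is positive definite. Then det(T_{N+1})·det(T_{N−1}) ≤ det(T_N)², i.e., the quotients det(T_{n+1})/det(T_n) are non-increasing: det(T_{N+1})/det(T_N) ≤ det(T_N)/det(T_{N−1}). -/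
open Matrix

private lemma snoc_dot {n : ℕ} (y : Fin n → ℝ) (v : Fin (n + 1) → ℝ) :
    (Fin.snoc y 0 : Fin (n + 1) → ℝ) ⬝ᵥ v = y ⬝ᵥ fun k => v k.castSucc := by
  simp [dotProduct, Fin.sum_univ_castSucc]

private lemma snoc_quad {n : ℕ} (A : Matrix (Fin (n + 1)) (Fin (n + 1)) ℝ) (y : Fin n → ℝ) :
    (Fin.snoc y 0 : Fin (n + 1) → ℝ) ⬝ᵥ (A *ᵥ (Fin.snoc y 0 : Fin (n + 1) → ℝ)) =
      y ⬝ᵥ ((A.submatrix Fin.castSucc Fin.castSucc) *ᵥ y) := by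
  simp [dotProduct, mulVec, Fin.sum_univ_castSucc]

private lemma posDef_castSucc {n : ℕ} {A : Matrix (Fin (n + 1)) (Fin (n + 1)) ℝ}
    (hA : A.PosDef) : (A.submatrix Fin.castSucc Fin.castSucc).PosDef := by
  refine PosDef.of_dotProduct_mulVec_pos (hA.1.submatrix _) fun x hx => ?_
  have hx' : (Fin.snoc x 0 : Fin (n + 1) → ℝ) ≠ 0 := by
    intro h
    apply hx
    funext k
    have := congrFun h k.castSucc
    simpa using this
  have h := hA.dotProduct_mulVec_pos hx'
  rw [star_trivial] at h
  rw [star_trivial]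
  rw [snoc_quad A x] at h
  exact h

private lemma quad_ineq {n : ℕ} {A : Matrix (Fin n) (Fin n) ℝ} (hA : A.PosDef)
    (v x : Fin n → ℝ) :
    2 * (x ⬝ᵥ v) - x ⬝ᵥ (A *ᵥ x) ≤ v ⬝ᵥ (A⁻¹ *ᵥ v) := by
  set u := A⁻¹ *ᵥ v with hu
  have hdet : IsUnit A.det := hA.det_pos.ne'.isUnit
  have hAu : A *ᵥ u = v := by
    rw [hu, mulVec_mulVec, mul_nonsing_inv _ hdet, one_mulVec]
  have hsym : Aᵀ = A := by
    rw [← conjTranspose_eq_transpose_of_trivial]; exact hA.1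
  have h := hA.posSemidef.dotProduct_mulVec_nonneg (x - u)
  rw [star_trivial] at h
  have huAx : u ⬝ᵥ (A *ᵥ x) = x ⬝ᵥ v := by
    rw [dotProduct_mulVec, ← mulVec_transpose, hsym, hAu, dotProduct_comm]
  have hxAu : x ⬝ᵥ (A *ᵥ u) = x ⬝ᵥ v := by rw [hAu]
  have huAu : u ⬝ᵥ (A *ᵥ u) = v ⬝ᵥ (A⁻¹ *ᵥ v) := by
    rw [hAu, dotProduct_comm]
  rw [mulVec_sub, dotProduct_sub, sub_dotProduct, sub_dotProduct] at h
  linarith [h]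

private lemma key_ineq {n : ℕ} {A : Matrix (Fin (n + 1)) (Fin (n + 1)) ℝ}
    (hA : A.PosDef) (v : Fin (n + 1) → ℝ) :
    (fun k => v (Fin.castSucc k)) ⬝ᵥ ((A.submatrix Fin.castSucc Fin.castSucc)⁻¹ *ᵥ
      fun k => v (Fin.castSucc k)) ≤ v ⬝ᵥ (A⁻¹ *ᵥ v) := by
  set B := A.submatrix Fin.castSucc Fin.castSucc with hBdef
  set w : Fin n → ℝ := fun k => v k.castSucc with hw
  have hB : B.PosDef := posDef_castSucc hA
  set y := B⁻¹ *ᵥ w with hy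
  have hBy : B *ᵥ y = w := by
    rw [hy, mulVec_mulVec, mul_nonsing_inv _ hB.det_pos.ne'.isUnit, one_mulVec]
  have h := quad_ineq hA v (Fin.snoc y 0)
  rw [snoc_dot, snoc_quad, ← hw, ← hBdef, hBy] at h
  have hyw : y ⬝ᵥ w = w ⬝ᵥ (B⁻¹ *ᵥ w) := by rw [hy, dotProduct_comm]
  linarith [h]

private lemma det_bordered {n : ℕ} (A : Matrix (Fin (n + 1)) (Fin (n + 1)) ℝ)
    (hB : IsUnit (A.submatrix Fin.succ Fin.succ).det) :
    A.det = (A 0 0 - (fun j => A 0 j.succ) ⬝ᵥ ((A.submatrix Fin.succ Fin.succ)⁻¹ *ᵥ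
      fun i => A i.succ 0)) * (A.submatrix Fin.succ Fin.succ).det := by
  set B := A.submatrix Fin.succ Fin.succ with hBdef
  haveI : Invertible B := B.invertibleOfIsUnitDet hB
  let e : Fin 1 ⊕ Fin n ≃ Fin (n + 1) :=
    finSumFinEquiv.trans (finCongr (Nat.add_comm 1 n))
  have he0 : ∀ i : Fin 1, e (Sum.inl i) = 0 := by
    intro i; ext; simp [e, Fin.fin_one_eq_zero i]
  have hes : ∀ k : Fin n, e (Sum.inr k) = k.succ := by
    intro k; ext; simp [e, Nat.add_comm]
  have hsub : A.submatrix e e = fromBlocks (Matrix.of fun (_ _ : Fin 1) => A 0 0)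
      (Matrix.of fun (_ : Fin 1) j => A 0 j.succ)
      (Matrix.of fun i (_ : Fin 1) => A i.succ 0) B := by
    ext i j
    rcases i with i | i <;> rcases j with j | j <;>
      simp [fromBlocks, he0, hes, hBdef]
  have hdet := Matrix.det_submatrix_equiv_self e A
  rw [hsub] at hdet
  rw [← hdet, det_fromBlocks₂₂, mul_comm]
  congr 1
  rw [Matrix.det_fin_one]
  simp only [Matrix.sub_apply, Matrix.of_apply]
  congr 1
  simp [Matrix.mul_apply, dotProduct, mulVec, Finset.mul_sum, Finset.sum_mul]
  rw [Finset.sum_comm]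
  apply Finset.sum_congr rfl
  intro i _
  apply Finset.sum_congr rfl
  intro j _
  ring

/-- Proposition 3: quotients of determinants of symmetric Toeplitz matrices are
non-increasing (stated as `det(T_{N+1})·det(T_{N-1}) ≤ det(T_N)²`). -/
theorem stmt_13 (t : ℕ → ℝ)
    (T : (k : ℕ) → Matrix (Fin k) (Fin k) ℝ)
    (hT : ∀ k, ∀ i j : Fin k, T k i j = t (((i : ℤ) - (j : ℤ)).natAbs))
    (N : ℕ) (hN : 2 ≤ N) (hpos : (T (N + 1)).PosDef) :
    (T (N + 1)).det * (T (N - 1)).det ≤ (T N).det ^ 2 := by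
  obtain ⟨m, rfl⟩ : ∃ m, N = m + 2 := ⟨N - 2, by omega⟩
  have hNm1 : m + 2 - 1 = m + 1 := by omega
  rw [hNm1]
  -- submatrix relations
  have hsub2 : (T (m + 3)).submatrix Fin.castSucc Fin.castSucc = T (m + 2) := by
    ext i j; simp only [Matrix.submatrix_apply, hT]
    congr 1
  have hsub1 : (T (m + 2)).submatrix Fin.castSucc Fin.castSucc = T (m + 1) := by
    ext i j; simp only [Matrix.submatrix_apply, hT]
    congr 1
  have hsub2' : (T (m + 3)).submatrix Fin.succ Fin.succ = T (m + 2) := by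
    ext i j; simp only [Matrix.submatrix_apply, hT]
    congr 1; simp only [Fin.val_succ]; omega
  have hsub1' : (T (m + 2)).submatrix Fin.succ Fin.succ = T (m + 1) := by
    ext i j; simp only [Matrix.submatrix_apply, hT]
    congr 1; simp only [Fin.val_succ]; omega
  have hpos3 : (T (m + 3)).PosDef := hpos
  have hpos2 : (T (m + 2)).PosDef := hsub2 ▸ posDef_castSucc hpos3
  have hpos1 : (T (m + 1)).PosDef := hsub1 ▸ posDef_castSucc hpos2
  -- border vectors
  set v3 : Fin (m + 2) → ℝ := fun j => t ((j : ℕ) + 1) with hv3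
  set v2 : Fin (m + 1) → ℝ := fun j => t ((j : ℕ) + 1) with hv2
  have hrow3 : (fun j : Fin (m + 2) => T (m + 3) 0 j.succ) = v3 := by
    funext j; rw [hT]; congr 1
  have hcol3 : (fun i : Fin (m + 2) => T (m + 3) i.succ 0) = v3 := by
    funext i; rw [hT]; congr 1
  have hrow2 : (fun j : Fin (m + 1) => T (m + 2) 0 j.succ) = v2 := by
    funext j; rw [hT]; congr 1
  have hcol2 : (fun i : Fin (m + 1) => T (m + 2) i.succ 0) = v2 := by
    funext i; rw [hT]; congr 1
  have h00_3 : T (m + 3) 0 0 = t 0 := by rw [hT]; norm_num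
  have h00_2 : T (m + 2) 0 0 = t 0 := by rw [hT]; norm_num
  have hdet3 : (T (m + 3)).det =
      (t 0 - v3 ⬝ᵥ ((T (m + 2))⁻¹ *ᵥ v3)) * (T (m + 2)).det := by
    have := det_bordered (T (m + 3)) (by rw [hsub2']; exact hpos2.det_pos.ne'.isUnit)
    rwa [hsub2', hrow3, hcol3, h00_3] at this
  have hdet2 : (T (m + 2)).det =
      (t 0 - v2 ⬝ᵥ ((T (m + 1))⁻¹ *ᵥ v2)) * (T (m + 1)).det := by
    have := det_bordered (T (m + 2)) (by rw [hsub1']; exact hpos1.det_pos.ne'.isUnit)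
    rwa [hsub1', hrow2, hcol2, h00_2] at this
  -- key inequality
  have hkey : v2 ⬝ᵥ ((T (m + 1))⁻¹ *ᵥ v2) ≤ v3 ⬝ᵥ ((T (m + 2))⁻¹ *ᵥ v3) := by
    have h := key_ineq hpos2 v3
    rw [hsub1] at h
    have hvv : (fun k : Fin (m + 1) => v3 (Fin.castSucc k)) = v2 := by
      funext k; simp [hv3, hv2]
    rwa [hvv] at h
  have d2 := hpos2.det_pos
  have d1 := hpos1.det_pos
  rw [hdet3]
  have h2 : (T (m + 2)).det ^ 2 =
      (T (m + 2)).det * ((t 0 - v2 ⬝ᵥ ((T (m + 1))⁻¹ *ᵥ v2)) * (T (m + 1)).det) := by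
    rw [← hdet2]; ring
  rw [h2]
  nlinarith [mul_nonneg (mul_nonneg (sub_nonneg.2 hkey) d2.le) d1.le]
end

section
/- Fix a0 ∈ ℝ with |a0| < 1 and ε > 0, and let N ≥ 2 be an integer. Let M be the (N−1)×(N−1) real matrix with entries M_{ij} = a0^{|i−j|}/(1 − a0²) for i, j = 1, …, N−1. Then det( I_{N−1} + ε²·M ) ≥ ((1 − a0² + ε²)/(1 − a0²)) · r^{N−2}, where r = (1 + a0² + ε²)/2 + √( ((1 + a0² + ε²)/2)² − a0² ). -/
namespace AR1Aux

open Matrix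

variable {n : ℕ}

lemma sum_diag (i : Fin n) (F : Fin n → ℝ) :
    (∑ k : Fin n, if (i:ℕ) = (k:ℕ) then F k else 0) = F i := by
  rw [Fintype.sum_eq_single i]
  · simp
  · intro k hk
    exact if_neg (fun hc => hk (Fin.ext hc.symm))

lemma sum_pred (i : Fin n) (F : Fin n → ℝ) :
    (∑ k : Fin n, if (i:ℕ) = (k:ℕ)+1 then F k else 0)
      = if h : 0 < (i:ℕ) then F ⟨(i:ℕ)-1, lt_of_le_of_lt (Nat.pred_le _) i.isLt⟩ else 0 := by
  split_ifs with h
  · rw [Fintype.sum_eq_single (⟨(i:ℕ)-1, lt_of_le_of_lt (Nat.pred_le _) i.isLt⟩ : Fin n)]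
    · rw [if_pos (by simp; omega)]
    · intro k hk
      refine if_neg (fun hc => hk (Fin.ext ?_))
      simp
      omega
  · refine Finset.sum_eq_zero fun k _ => if_neg (by omega)

/-- lower bidiagonal matrix: diagonal `f`, subdiagonal constant `g` -/
def lowB (f : ℕ → ℝ) (g : ℝ) : Matrix (Fin n) (Fin n) ℝ :=
  Matrix.of fun i k => (if (i:ℕ) = (k:ℕ) then f (k:ℕ) else 0) +
    (if (i:ℕ) = (k:ℕ)+1 then g else 0)

/-- upper bidiagonal matrix: diagonal 1, superdiagonal `g (row index)` -/
def upB (g : ℕ → ℝ) : Matrix (Fin n) (Fin n) ℝ :=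
  Matrix.of fun k j => (if (k:ℕ) = (j:ℕ) then 1 else 0) +
    (if (j:ℕ) = (k:ℕ)+1 then g (k:ℕ) else 0)

lemma lowB_mul_apply (f : ℕ → ℝ) (g : ℝ) (A : Matrix (Fin n) (Fin n) ℝ) (i j : Fin n) :
    (lowB (n:=n) f g * A) i j = f (i:ℕ) * A i j +
      (if h : 0 < (i:ℕ) then
        g * A ⟨(i:ℕ)-1, lt_of_le_of_lt (Nat.pred_le _) i.isLt⟩ j else 0) := by
  rw [Matrix.mul_apply]
  simp only [lowB, Matrix.of_apply, add_mul, ite_mul, zero_mul]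
  rw [Finset.sum_add_distrib, sum_diag i (fun k => f (k:ℕ) * A k j),
    sum_pred i (fun k => g * A k j)]

lemma lowB_mul_apply₀ (f : ℕ → ℝ) (g : ℝ) (A : Matrix (Fin n) (Fin n) ℝ) (i j : Fin n)
    (h0 : (i:ℕ) = 0) : (lowB (n:=n) f g * A) i j = f (i:ℕ) * A i j := by
  rw [lowB_mul_apply, dif_neg (by omega), add_zero]

lemma lowB_mul_apply₁ (f : ℕ → ℝ) (g : ℝ) (A : Matrix (Fin n) (Fin n) ℝ) (i j : Fin n)
    (i' : Fin n) (h1 : (i:ℕ) = (i':ℕ)+1) :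
    (lowB (n:=n) f g * A) i j = f (i:ℕ) * A i j + g * A i' j := by
  rw [lowB_mul_apply, dif_pos (by omega)]
  have he : (⟨(i:ℕ)-1, lt_of_le_of_lt (Nat.pred_le _) i.isLt⟩ : Fin n) = i' :=
    Fin.ext (by simp only [Fin.val_mk]; omega)
  rw [he]

lemma mul_upB_apply (g : ℕ → ℝ) (A : Matrix (Fin n) (Fin n) ℝ) (i j : Fin n) :
    (A * upB (n:=n) g) i j = A i j +
      (if h : 0 < (j:ℕ) then
        A i ⟨(j:ℕ)-1, lt_of_le_of_lt (Nat.pred_le _) j.isLt⟩ * g ((j:ℕ)-1) else 0) := by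
  rw [Matrix.mul_apply]
  simp only [upB, Matrix.of_apply, mul_add, mul_ite, mul_zero]
  rw [Finset.sum_add_distrib]
  congr 1
  · rw [Fintype.sum_eq_single j]
    · simp
    · intro k hk
      simp only [mul_ite, mul_one, mul_zero]
      exact if_neg (fun hc => hk (Fin.ext hc))
  · rw [sum_pred j (fun k => A i k * g (k:ℕ))]

lemma mul_upB_apply₀ (g : ℕ → ℝ) (A : Matrix (Fin n) (Fin n) ℝ) (i j : Fin n)
    (h0 : (j:ℕ) = 0) : (A * upB (n:=n) g) i j = A i j := by
  rw [mul_upB_apply, dif_neg (by omega), add_zero]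

lemma mul_upB_apply₁ (g : ℕ → ℝ) (A : Matrix (Fin n) (Fin n) ℝ) (i j : Fin n)
    (j' : Fin n) (h1 : (j:ℕ) = (j':ℕ)+1) :
    (A * upB (n:=n) g) i j = A i j + A i j' * g (j':ℕ) := by
  rw [mul_upB_apply, dif_pos (by omega)]
  have he : (⟨(j:ℕ)-1, lt_of_le_of_lt (Nat.pred_le _) j.isLt⟩ : Fin n) = j' :=
    Fin.ext (by simp only [Fin.val_mk]; omega)
  have he2 : (j:ℕ)-1 = (j':ℕ) := by omega
  rw [he, he2]

lemma lowB_blockTriangular (f : ℕ → ℝ) (g : ℝ) :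
    (lowB (n := n) f g).BlockTriangular OrderDual.toDual := by
  intro i j hij
  have : (i:ℕ) < (j:ℕ) := hij
  simp only [lowB, Matrix.of_apply]
  rw [if_neg (by omega), if_neg (by omega), add_zero]

lemma upB_blockTriangular (g : ℕ → ℝ) :
    (upB (n := n) g).BlockTriangular id := by
  intro i j hij
  have : (j:ℕ) < (i:ℕ) := hij
  simp only [upB, Matrix.of_apply]
  rw [if_neg (by omega), if_neg (by omega), add_zero]

lemma det_lowB (f : ℕ → ℝ) (g : ℝ) :
    (lowB (n := n) f g).det = ∏ i : Fin n, f (i:ℕ) := by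
  rw [Matrix.det_of_lowerTriangular _ (lowB_blockTriangular f g)]
  refine Finset.prod_congr rfl fun i _ => ?_
  simp only [lowB, Matrix.of_apply]
  simp

lemma det_upB (g : ℕ → ℝ) : (upB (n := n) g).det = 1 := by
  rw [Matrix.det_of_upperTriangular (upB_blockTriangular g)]
  refine Finset.prod_eq_one fun i _ => ?_
  simp only [upB, Matrix.of_apply]
  simp

/-- the continued-fraction pivot sequence -/
noncomputable def pseq (b c a : ℝ) : ℕ → ℝ
  | 0 => c
  | k+1 => b - a^2 / pseq b c a k

lemma pseq_zero (b c a : ℝ) : pseq b c a 0 = c := rfl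

lemma pseq_succ (b c a : ℝ) (k : ℕ) : pseq b c a (k+1) = b - a^2 / pseq b c a k := rfl

/-- intermediate matrix `G = L * (1 + ε² M)` -/
noncomputable def matG (a ε u : ℝ) (n : ℕ) : Matrix (Fin n) (Fin n) ℝ :=
  Matrix.of fun i j =>
    if (i:ℕ) = 0 then (if (j:ℕ) = 0 then 1 + ε^2/u else ε^2 * a^(j:ℕ)/u)
    else ((if (i:ℕ) = (j:ℕ) then 1 else 0) + (if (i:ℕ) = (j:ℕ)+1 then -a else 0) +
          (if (i:ℕ) ≤ (j:ℕ) then ε^2 * a^((j:ℕ)-(i:ℕ)) else 0))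

/-- tridiagonal matrix `B` -/
noncomputable def matB (a bb cc : ℝ) (n : ℕ) : Matrix (Fin n) (Fin n) ℝ :=
  Matrix.of fun i j =>
    (if (i:ℕ) = (j:ℕ) then (if (i:ℕ) = 0 then cc else bb) else 0) +
    (if (i:ℕ) = (j:ℕ)+1 then -a else 0) + (if (j:ℕ) = (i:ℕ)+1 then -a else 0)

lemma LA_eq (a ε u : ℝ) (hua : 1 - a^2 = u) (hu : u ≠ 0)
    (M : Matrix (Fin n) (Fin n) ℝ)
    (hM : ∀ i j, M i j = a ^ (((i:ℤ) - (j:ℤ)).natAbs) / u) :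
    lowB (n:=n) (fun _ => 1) (-a) * (1 + ε^2 • M) = matG a ε u n := by
  subst hua
  ext i j
  simp only [matG, Matrix.of_apply]
  by_cases h0 : (i:ℕ) = 0
  · rw [lowB_mul_apply₀ _ _ _ _ _ h0]
    simp only [Matrix.add_apply, Matrix.smul_apply, Matrix.one_apply, hM, smul_eq_mul,
      one_mul, Fin.ext_iff]
    by_cases hj0 : (j:ℕ) = 0
    · rw [show (((i:ℤ) - (j:ℤ)).natAbs) = 0 by omega]
      split_ifs <;> try (exfalso; omega)
      all_goals try ring1
      all_goals (field_simp [hu]; try ring1)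
    · rw [show (((i:ℤ) - (j:ℤ)).natAbs) = (j:ℕ) by omega]
      split_ifs <;> try (exfalso; omega)
      all_goals try ring1
      all_goals (field_simp [hu]; try ring1)
  · have hilt : (i:ℕ)-1 < n := lt_of_le_of_lt (Nat.pred_le _) i.isLt
    set i' : Fin n := ⟨(i:ℕ)-1, hilt⟩ with hi'def
    have hi'v : (i':ℕ) = (i:ℕ)-1 := rfl
    rw [lowB_mul_apply₁ _ _ _ _ _ i' (by omega)]
    simp only [Matrix.add_apply, Matrix.smul_apply, Matrix.one_apply, hM, smul_eq_mul,
      one_mul, Fin.ext_iff]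
    by_cases hle : (i:ℕ) ≤ (j:ℕ)
    · rw [show (((i':ℤ) - (j:ℤ)).natAbs) = ((j:ℕ) - (i:ℕ)) + 1 by omega,
        show (((i:ℤ) - (j:ℤ)).natAbs) = (j:ℕ) - (i:ℕ) by omega]
      split_ifs <;> try (exfalso; omega)
      all_goals try ring1
      all_goals (field_simp [hu]; try ring1)
    · by_cases hadj : (i:ℕ) = (j:ℕ)+1
      · rw [show (((i:ℤ) - (j:ℤ)).natAbs) = 1 by omega,
          show (((i':ℤ) - (j:ℤ)).natAbs) = 0 by omega]
        split_ifs <;> try (exfalso; omega)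
        all_goals try ring1
        all_goals (field_simp [hu]; try ring1)
      · rw [show (((i:ℤ) - (j:ℤ)).natAbs) = ((i:ℕ) - 1 - (j:ℕ)) + 1 by omega,
          show (((i':ℤ) - (j:ℤ)).natAbs) = (i:ℕ) - 1 - (j:ℕ) by omega]
        split_ifs <;> try (exfalso; omega)
        all_goals try ring1
        all_goals (field_simp [hu]; try ring1)

lemma GU_eq (a ε u : ℝ) (hu : u ≠ 0) :
    matG a ε u n * upB (fun _ => -a) = matB a (1+a^2+ε^2) (1+ε^2/u) n := by
  ext i j
  by_cases hj0 : (j:ℕ) = 0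
  · rw [mul_upB_apply₀ _ _ _ _ hj0]
    simp only [matG, matB, Matrix.of_apply]
    split_ifs <;> try (exfalso; omega)
    all_goals try ring1
    all_goals (field_simp [hu]; try ring1)
  · have hjlt : (j:ℕ)-1 < n := lt_of_le_of_lt (Nat.pred_le _) j.isLt
    set j' : Fin n := ⟨(j:ℕ)-1, hjlt⟩ with hj'def
    have hj'v : (j':ℕ) = (j:ℕ)-1 := rfl
    rw [mul_upB_apply₁ _ _ _ _ j' (by omega)]
    simp only [matG, matB, Matrix.of_apply]
    rw [show a^((j:ℕ)) = a^((j:ℕ)-1) * a by rw [← pow_succ]; congr 1; omega]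
    rcases Nat.lt_trichotomy (i:ℕ) (j:ℕ) with hlt | heq | hgt
    · by_cases hadj : (j:ℕ) = (i:ℕ)+1
      · rw [show ((j:ℕ) - (i:ℕ)) = 1 by omega, show ((j:ℕ)-1 - (i:ℕ)) = 0 by omega]
        split_ifs <;> try (exfalso; omega)
        all_goals try ring1
        all_goals try (rw [show (j:ℕ)-1 = 0 by omega, pow_zero])
        all_goals try ring1
        all_goals (field_simp [hu]; try ring1)
      · rw [show a^((j:ℕ)-(i:ℕ)) = a^((j:ℕ)-1-(i:ℕ)) * a by
            rw [← pow_succ]; congr 1; omega]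
        split_ifs <;> try (exfalso; omega)
        all_goals try ring1
        all_goals (field_simp [hu]; try ring1)
    · rw [show ((j:ℕ) - (i:ℕ)) = 0 by omega]
      split_ifs <;> try (exfalso; omega)
      all_goals try ring1
      all_goals (field_simp [hu]; try ring1)
    · split_ifs <;> try (exfalso; omega)
      all_goals try ring1
      all_goals (field_simp [hu]; try ring1)

lemma LoUp_eq (a bb cc : ℝ) (p : ℕ → ℝ) (hp : ∀ k, p k ≠ 0)
    (hp0 : p 0 = cc) (hps : ∀ k, p (k+1) = bb - a^2 / p k) :
    lowB (n:=n) (fun k => p k) (-a) * upB (fun k => -a / p k) = matB a bb cc n := by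
  ext i j
  simp only [matB, Matrix.of_apply]
  by_cases h0 : (i:ℕ) = 0
  · rw [lowB_mul_apply₀ _ _ _ _ _ h0]
    simp only [upB, Matrix.of_apply]
    have hcc0 : cc ≠ 0 := hp0 ▸ hp 0
    rw [show p (i:ℕ) = cc from by rw [h0, hp0]]
    split_ifs <;> try (exfalso; omega)
    all_goals try ring1
    all_goals (field_simp [hcc0]; try ring1)
  · have hilt : (i:ℕ)-1 < n := lt_of_le_of_lt (Nat.pred_le _) i.isLt
    set i' : Fin n := ⟨(i:ℕ)-1, hilt⟩ with hi'def
    have hi'v : (i':ℕ) = (i:ℕ)-1 := rfl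
    rw [lowB_mul_apply₁ _ _ _ _ _ i' (by omega)]
    simp only [upB, Matrix.of_apply]
    have h1 := hp (i:ℕ)
    have h2 := hp ((i:ℕ)-1)
    have hrec := hps ((i:ℕ)-1)
    rw [show (i:ℕ)-1+1 = (i:ℕ) by omega] at hrec
    split_ifs <;> try (exfalso; omega)
    all_goals try ring1
    all_goals try (field_simp [h1]; ring1)
    all_goals (rw [hrec]; field_simp [h2, hi'v]; try ring1)

end AR1Aux

set_option maxHeartbeats 1000000 in
/-- Lower bound (8) on the determinant of the perturbed stationary AR(1)
autocovariance Toeplitz matrix. -/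
theorem stmt_14 (a0 : ℝ) (ha : |a0| < 1) (ε : ℝ) (hε : 0 < ε)
    (N : ℕ) (hN : 2 ≤ N)
    (M : Matrix (Fin (N - 1)) (Fin (N - 1)) ℝ)
    (hM : ∀ i j, M i j = a0 ^ (((i : ℤ) - (j : ℤ)).natAbs) / (1 - a0 ^ 2))
    (r : ℝ)
    (hr : r = (1 + a0 ^ 2 + ε ^ 2) / 2 +
      Real.sqrt (((1 + a0 ^ 2 + ε ^ 2) / 2) ^ 2 - a0 ^ 2)) :
    ((1 - a0 ^ 2 + ε ^ 2) / (1 - a0 ^ 2)) * r ^ (N - 2) ≤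
      Matrix.det (1 + ε ^ 2 • M) := by
  open AR1Aux in
  have ha2 : a0^2 < 1 := by nlinarith [abs_nonneg a0, sq_abs a0]
  set u : ℝ := 1 - a0^2 with hu_def
  have hu : 0 < u := by rw [hu_def]; nlinarith
  set b : ℝ := 1 + a0^2 + ε^2 with hb_def
  set c : ℝ := 1 + ε^2/u with hc_def
  set D : ℝ := (b/2)^2 - a0^2 with hD_def
  have hD : 0 ≤ D := by rw [hD_def, hb_def]; nlinarith [sq_nonneg (1 - a0^2), sq_nonneg ε]
  have hsq : Real.sqrt D ^ 2 = D := Real.sq_sqrt hD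
  have hsqnn : 0 ≤ Real.sqrt D := Real.sqrt_nonneg D
  have hr_eq : r = b/2 + Real.sqrt D := hr
  have hune : (1 - a0^2) ≠ 0 := by nlinarith
  clear_value u b c D
  have hu0 : u ≠ 0 := ne_of_gt hu
  have hc_eq : (u + ε^2) / u = c := by
    rw [hc_def]; field_simp
  have hb_pos : 0 < b := by rw [hb_def]; nlinarith
  have hr_pos : 0 < r := by rw [hr_eq]; nlinarith
  have hr2 : r^2 - b*r + a0^2 = 0 := by
    rw [hr_eq]
    linear_combination hsq + hD_def
  have hrb : a0^2 / r = b - r := by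
    rw [div_eq_iff (ne_of_gt hr_pos)]
    linear_combination hr2
  have hc_pos : 0 < c := by
    rw [hc_def]; positivity
  have hcb : 0 ≤ c - b/2 := by
    have h1 : ε^2 ≤ ε^2/u := by
      rw [le_div_iff₀ hu]
      nlinarith [sq_nonneg ε, sq_nonneg a0]
    rw [hc_def, hb_def]
    linarith [h1, ha2, sq_nonneg ε]
  have hkey : D ≤ (c - b/2)^2 := by
    have hcc : c^2 - b*c + a0^2 = a0^2 * ε^4 / u^2 := by
      rw [hc_def, hb_def, hu_def]
      field_simp [hune]
      ring
    have h2 : 0 ≤ c^2 - b*c + a0^2 := by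
      rw [hcc]; positivity
    have expand : (c - b/2)^2 = c^2 - b*c + (b/2)^2 := by ring
    rw [hD_def, expand]
    linarith [h2]
  have hrc : r ≤ c := by
    have h1 : Real.sqrt D ≤ c - b/2 := by
      calc Real.sqrt D ≤ Real.sqrt ((c - b/2)^2) := Real.sqrt_le_sqrt hkey
      _ = c - b/2 := Real.sqrt_sq hcb
    rw [hr_eq]; linarith
  set p : ℕ → ℝ := pseq b c a0 with hp_def
  have hp0 : p 0 = c := pseq_zero b c a0
  have hps : ∀ k, p (k+1) = b - a0^2 / p k := fun k => pseq_succ b c a0 k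
  have hp_ge : ∀ k, r ≤ p k := by
    intro k
    induction k with
    | zero => rw [hp0]; exact hrc
    | succ k ih =>
      have hdiv : a0^2 / p k ≤ a0^2 / r :=
        div_le_div_of_nonneg_left (sq_nonneg a0) hr_pos ih
      rw [hps]
      linarith [hdiv, hrb]
  have hp_pos : ∀ k, 0 < p k := fun k => lt_of_lt_of_le hr_pos (hp_ge k)
  have hp_ne : ∀ k, p k ≠ 0 := fun k => ne_of_gt (hp_pos k)
  have hM' : ∀ i j, M i j = a0 ^ (((i:ℤ) - (j:ℤ)).natAbs) / u := hM
  have hLA := LA_eq (n := N-1) a0 ε u hu_def.symm (ne_of_gt hu) M hM'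
  have hGU := GU_eq (n := N-1) a0 ε u (ne_of_gt hu)
  have hLoUp := LoUp_eq (n := N-1) a0 b c p hp_ne hp0 hps
  have hdetA : (1 + ε^2 • M).det = ∏ i : Fin (N-1), p (i:ℕ) := by
    have e1 : (lowB (n:=N-1) (fun _ => 1) (-a0) * (1 + ε^2 • M) *
        upB (fun _ => -a0)).det = (1 + ε^2 • M).det := by
      rw [Matrix.det_mul, Matrix.det_mul, det_lowB, det_upB]
      simp
    have e2 : lowB (n:=N-1) (fun _ => 1) (-a0) * (1 + ε^2 • M) * upB (fun _ => -a0)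
        = matB a0 b c (N-1) := by
      rw [hLA, hGU, ← hb_def, ← hc_def]
    rw [← e1, e2, ← hLoUp, Matrix.det_mul, det_lowB, det_upB, mul_one]
  rw [hc_eq, hdetA]
  rw [Fin.prod_univ_eq_prod_range (fun k => p k) (N-1)]
  obtain ⟨m, hm⟩ : ∃ m, N - 1 = m + 1 := ⟨N - 2, by omega⟩
  have hm2 : N - 2 = m := by omega
  rw [hm, hm2, Finset.prod_range_succ']
  have h1 : r ^ m ≤ ∏ i ∈ Finset.range m, p (i+1) := by
    calc r ^ m = ∏ _i ∈ Finset.range m, r := by rw [Finset.prod_const, Finset.card_range]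
    _ ≤ ∏ i ∈ Finset.range m, p (i+1) :=
        Finset.prod_le_prod (fun i _ => le_of_lt hr_pos) (fun i _ => hp_ge (i+1))
  calc c * r ^ m ≤ c * ∏ i ∈ Finset.range m, p (i+1) :=
        mul_le_mul_of_nonneg_left h1 (le_of_lt hc_pos)
  _ = (∏ i ∈ Finset.range m, p (i+1)) * p 0 := by rw [hp0]; ring
end

section
/- Fix a0 ∈ ℝ with |a0| < 1 and an integer N ≥ 7. Then the improper integral ∫_0^∞ ( (1 + a0² + x)/2 + (1/2)·√((1 + a0² + x)² − 4a0²) )^{−(N−2)/4} dx converges and equals 4/(N − 6) − 4a0²/(N + 2). -/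
open MeasureTheory

/-- The integral used to bound the variance in the stable case (Theorem 1). -/
theorem stmt_15 (a0 : ℝ) (ha : |a0| < 1) (N : ℕ) (hN : 7 ≤ N) :
    IntegrableOn (fun x : ℝ =>
        ((1 + a0 ^ 2 + x) / 2 +
          Real.sqrt ((1 + a0 ^ 2 + x) ^ 2 - 4 * a0 ^ 2) / 2) ^ (-((N : ℝ) - 2) / 4))
      (Set.Ioi (0 : ℝ)) volume ∧
    ∫ x in Set.Ioi (0 : ℝ),
        ((1 + a0 ^ 2 + x) / 2 +
          Real.sqrt ((1 + a0 ^ 2 + x) ^ 2 - 4 * a0 ^ 2) / 2) ^ (-((N : ℝ) - 2) / 4) =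
      4 / ((N : ℝ) - 6) - 4 * a0 ^ 2 / ((N : ℝ) + 2) := by
  have ha2 : a0 ^ 2 < 1 := by nlinarith [abs_nonneg a0, sq_abs a0]
  have ha0 : (0:ℝ) ≤ a0 ^ 2 := sq_nonneg a0
  have hN7 : (7:ℝ) ≤ (N:ℝ) := by exact_mod_cast hN
  have hN6 : (N:ℝ) - 6 ≠ 0 := by linarith
  have hN2 : (N:ℝ) + 2 ≠ 0 := by linarith
  set f : ℝ → ℝ := fun x =>
    (1 + a0 ^ 2 + x) / 2 + Real.sqrt ((1 + a0 ^ 2 + x) ^ 2 - 4 * a0 ^ 2) / 2 with hfdef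
  set g : ℝ → ℝ := fun x =>
    (-4 / ((N:ℝ) - 6)) * f x ^ ((6 - (N:ℝ)) / 4)
      + (4 * a0 ^ 2 / ((N:ℝ) + 2)) * f x ^ (-((N:ℝ) + 2) / 4) with hgdef
  have hdisc : ∀ x : ℝ, 0 ≤ x → 0 < (1 + a0 ^ 2 + x) ^ 2 - 4 * a0 ^ 2 := by
    intro x hx
    nlinarith [sq_nonneg x, mul_nonneg (show (0:ℝ) ≤ 1 + a0 ^ 2 by linarith) hx]
  have hfpos : ∀ x : ℝ, 0 ≤ x → 0 < f x := by
    intro x hx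
    have h1 := Real.sqrt_nonneg ((1 + a0 ^ 2 + x) ^ 2 - 4 * a0 ^ 2)
    simp only [hfdef]
    nlinarith
  -- derivative of g
  have key : ∀ x ∈ Set.Ici (0:ℝ), HasDerivAt g (f x ^ (-((N:ℝ) - 2) / 4)) x := by
    intro x hx
    have hx : (0:ℝ) ≤ x := hx
    have hd : 0 < (1 + a0 ^ 2 + x) ^ 2 - 4 * a0 ^ 2 := hdisc x hx
    set s : ℝ := 1 + a0 ^ 2 + x with hs
    set r : ℝ := Real.sqrt (s ^ 2 - 4 * a0 ^ 2) with hr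
    have hrpos : 0 < r := Real.sqrt_pos.2 hd
    have hr2 : r ^ 2 = s ^ 2 - 4 * a0 ^ 2 := Real.sq_sqrt hd.le
    have hu : f x = (s + r) / 2 := by
      simp only [hfdef]
      rw [hr, hs]; ring
    have hupos : 0 < f x := hfpos x hx
    have hu0 : f x ≠ 0 := hupos.ne'
    -- derivative of f
    have hds : HasDerivAt (fun y : ℝ => 1 + a0 ^ 2 + y) 1 x :=
      (hasDerivAt_id x).const_add _
    have hinner : HasDerivAt (fun y : ℝ => (1 + a0 ^ 2 + y) ^ 2 - 4 * a0 ^ 2)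
        (2 * s) x := by
      have h := (hds.pow 2).sub_const (4 * a0 ^ 2)
      convert h using 1
      · rfl
      · rfl
      · rfl
      · simp [hs]
    have hsqrt : HasDerivAt (fun y : ℝ => Real.sqrt ((1 + a0 ^ 2 + y) ^ 2 - 4 * a0 ^ 2))
        (2 * s / (2 * r)) x := by
      have h := hinner.sqrt hd.ne'
      convert h using 1
    have hdf : HasDerivAt f (1 / 2 + 2 * s / (2 * r) / 2) x :=
      (hds.div_const 2).add (hsqrt.div_const 2)
    -- the derivative value identity
    have hDu : 1 / 2 + 2 * s / (2 * r) / 2 = f x / r := by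
      rw [hu]; field_simp; ring
    have huu : f x ^ 2 - a0 ^ 2 = f x * r := by
      rw [hu]; linear_combination (-1/4 : ℝ) * hr2
    have hur : f x * r ≠ 0 := mul_ne_zero hu0 hrpos.ne'
    have e1 : f x ^ ((6 - (N:ℝ)) / 4 - 1) = f x ^ (-((N:ℝ) - 2) / 4) := by
      rw [show (6 - (N:ℝ)) / 4 - 1 = -((N:ℝ) - 2) / 4 by ring]
    have e2 : f x ^ (-((N:ℝ) + 2) / 4 - 1)
        = f x ^ (-((N:ℝ) - 2) / 4) * (f x)⁻¹ * (f x)⁻¹ := by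
      rw [show -((N:ℝ) + 2) / 4 - 1 = -((N:ℝ) - 2) / 4 + (-1) + (-1) by ring,
        Real.rpow_add hupos, Real.rpow_add hupos, Real.rpow_neg_one]
    have heq : f x ^ (-((N:ℝ) - 2) / 4)
        = (-4 / ((N:ℝ) - 6)) * ((1 / 2 + 2 * s / (2 * r) / 2) * ((6 - (N:ℝ)) / 4)
            * f x ^ ((6 - (N:ℝ)) / 4 - 1))
          + (4 * a0 ^ 2 / ((N:ℝ) + 2)) * ((1 / 2 + 2 * s / (2 * r) / 2) * (-((N:ℝ) + 2) / 4)
            * f x ^ (-((N:ℝ) + 2) / 4 - 1)) := by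
      rw [e1, e2, hDu]
      generalize f x ^ (-((N:ℝ) - 2) / 4) = A
      calc A = A * ((f x * r) / (f x * r)) := by rw [div_self hur]; ring
        _ = A * ((f x ^ 2 - a0 ^ 2) / (f x * r)) := by rw [huu]
        _ = _ := by field_simp; ring
    have h1 : HasDerivAt (fun y => (-4 / ((N:ℝ) - 6)) * f y ^ ((6 - (N:ℝ)) / 4))
        ((-4 / ((N:ℝ) - 6)) * ((1 / 2 + 2 * s / (2 * r) / 2) * ((6 - (N:ℝ)) / 4)
          * f x ^ ((6 - (N:ℝ)) / 4 - 1))) x :=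
      (hdf.rpow_const (Or.inl hu0)).const_mul _
    have h2 : HasDerivAt (fun y => (4 * a0 ^ 2 / ((N:ℝ) + 2)) * f y ^ (-((N:ℝ) + 2) / 4))
        ((4 * a0 ^ 2 / ((N:ℝ) + 2)) * ((1 / 2 + 2 * s / (2 * r) / 2) * (-((N:ℝ) + 2) / 4)
          * f x ^ (-((N:ℝ) + 2) / 4 - 1))) x :=
      (hdf.rpow_const (Or.inl hu0)).const_mul _
    rw [hgdef, heq]
    exact h1.add h2
  -- nonnegativity of derivative
  have hpos : ∀ x ∈ Set.Ioi (0:ℝ), 0 ≤ f x ^ (-((N:ℝ) - 2) / 4) := by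
    intro x hx
    exact Real.rpow_nonneg (hfpos x (le_of_lt hx)).le _
  -- limit of g at infinity
  have hftop : Filter.Tendsto f Filter.atTop Filter.atTop := by
    have hbase : Filter.Tendsto (fun x : ℝ => (1 + a0 ^ 2) / 2 + id x / 2)
        Filter.atTop Filter.atTop :=
      Filter.tendsto_atTop_add_const_left _ _
        (Filter.tendsto_id.atTop_div_const (by norm_num : (0:ℝ) < 2))
    have hle : ∀ x : ℝ, (1 + a0 ^ 2) / 2 + id x / 2 ≤ f x := by
      intro x
      simp only [hfdef, id]
      linarith [Real.sqrt_nonneg ((1 + a0 ^ 2 + x) ^ 2 - 4 * a0 ^ 2)]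
    exact Filter.tendsto_atTop_mono hle hbase
  have hgtop : Filter.Tendsto g Filter.atTop (nhds 0) := by
    have l1 : Filter.Tendsto (fun x => f x ^ ((6 - (N:ℝ)) / 4)) Filter.atTop (nhds 0) := by
      have h := (tendsto_rpow_neg_atTop (show (0:ℝ) < ((N:ℝ) - 6) / 4 by linarith)).comp hftop
      simpa [Function.comp_def, show -(((N:ℝ) - 6) / 4) = (6 - (N:ℝ)) / 4 by ring] using h
    have l2 : Filter.Tendsto (fun x => f x ^ (-((N:ℝ) + 2) / 4)) Filter.atTop (nhds 0) := by
      have h := (tendsto_rpow_neg_atTop (show (0:ℝ) < ((N:ℝ) + 2) / 4 by linarith)).comp hftop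
      simpa [Function.comp_def, show -(((N:ℝ) + 2) / 4) = -((N:ℝ) + 2) / 4 by ring] using h
    have h := (l1.const_mul (-4 / ((N:ℝ) - 6))).add (l2.const_mul (4 * a0 ^ 2 / ((N:ℝ) + 2)))
    simpa [hgdef] using h
  have hf0 : f 0 = 1 := by
    simp only [hfdef]
    rw [show (1 + a0 ^ 2 + 0) ^ 2 - 4 * a0 ^ 2 = (1 - a0 ^ 2) ^ 2 by ring,
      Real.sqrt_sq (by linarith : (0:ℝ) ≤ 1 - a0 ^ 2)]
    ring
  have hg0 : g 0 = -4 / ((N:ℝ) - 6) + 4 * a0 ^ 2 / ((N:ℝ) + 2) := by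
    simp [hgdef, hf0]
  refine ⟨?_, ?_⟩
  · exact integrableOn_Ioi_deriv_of_nonneg' key hpos hgtop
  · have h := integral_Ioi_of_hasDerivAt_of_nonneg' key hpos hgtop
    rw [hg0, show (0:ℝ) - (-4 / ((N:ℝ) - 6) + 4 * a0 ^ 2 / ((N:ℝ) + 2))
      = 4 / ((N:ℝ) - 6) - 4 * a0 ^ 2 / ((N:ℝ) + 2) by ring] at h
    exact h
end
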